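/- Let V be a finite-dimensional real vector space with a non-degenerate skew-symmetric bilinear form B, and suppose V = U ⊕ W ⊕ Z where U is isotropic for B and U is orthogonal to W. Then dim U ≤ dim Z. -/
import Mathlib


/-- Let `V` be a finite-dimensional real vector space with a non-degenerate
skew-symmetric bilinear form `B`, and suppose `V = U ⊕ W ⊕ Z` (internal direct sum).
If `U` is isotropic for `B` and orthogonal to `W`, then `dim U ≤ dim Z`. -/
theorem isotropic_dim_le_of_symplectic
    (V : Type*) [AddCommGroup V] [Module ℝ V] [FiniteDimensional ℝ V]
    (B : V →ₗ[ℝ] V →ₗ[ℝ] ℝ)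
    (hskew : ∀ x y : V, B x y = - B y x)
    (hnondeg : ∀ x : V, (∀ y : V, B x y = 0) → x = 0)
    (U W Z : Submodule ℝ V)
    (hsum : U ⊔ W ⊔ Z = ⊤)
    (hUWZ : Disjoint U (W ⊔ Z)) (hWUZ : Disjoint W (U ⊔ Z)) (hZUW : Disjoint Z (U ⊔ W))
    (hiso : ∀ u ∈ U, ∀ u' ∈ U, B u u' = 0)
    (horth : ∀ u ∈ U, ∀ w ∈ W, B u w = 0) :
    Module.finrank ℝ U ≤ Module.finrank ℝ Z := by
  let L : U →ₗ[ℝ] Module.Dual ℝ Z :=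
    { toFun := fun u => (B u).comp Z.subtype
      map_add' := by intro u v; ext z; simp
      map_smul' := by intro r u; ext z; simp }
  have hinj : Function.Injective L := by
    rw [← LinearMap.ker_eq_bot, LinearMap.ker_eq_bot']
    intro u hu
    have hz : ∀ z ∈ Z, B (u : V) z = 0 := by
      intro z hzz
      have := congrFun (congrArg DFunLike.coe hu) ⟨z, hzz⟩
      simpa [L] using this
    have : (u : V) = 0 := by
      apply hnondeg
      intro y
      have hy : y ∈ U ⊔ W ⊔ Z := hsum ▸ Submodule.mem_top
      obtain ⟨a, ha, c, hc, rfl⟩ := Submodule.mem_sup.mp hy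
      obtain ⟨a1, ha1, a2, ha2, rfl⟩ := Submodule.mem_sup.mp ha
      simp [map_add, hiso u u.2 a1 ha1, horth u u.2 a2 ha2, hz c hc]
    exact Subtype.ext this
  calc Module.finrank ℝ U ≤ Module.finrank ℝ (Module.Dual ℝ Z) :=
        LinearMap.finrank_le_finrank_of_injective hinj
    _ = Module.finrank ℝ Z := Subspace.dual_finrank_eq
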